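/- arXiv:2407.05904 — 2 statements merged into one kernel-verified Lean document; each statement's English description precedes it below -/
import Mathlib

section
/- Between any two permutations u, w ∈ Sₙ there is at most one increasing k-chain. That is, if u = w₁ ⋖ₖ w₂ ⋖ₖ ⋯ ⋖ₖ w_d = w and u = w₁' ⋖ₖ ⋯ ⋖ₖ w_e' = w are two saturated chains in the k-Bruhat order whose sequences of smaller swapped values are strictly increasing, then d = e and w_i = w_i' for all i. -/
/-- Number of inversions of a permutation of `Fin n`. -/
def invCount {n : ℕ} (w : Equiv.Perm (Fin n)) : ℕ :=
  (Finset.univ.filter (fun p : Fin n × Fin n => p.1 < p.2 ∧ w p.2 < w p.1)).card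

/-- `w ∈ Sₙ^{k↘}` (1-indexed: `w(k+1) > ⋯ > w(n)`); positions are 0-indexed here. -/
def DescFrom (n k : ℕ) (w : Equiv.Perm (Fin n)) : Prop :=
  ∀ p q : Fin n, k ≤ (p : ℕ) → p < q → w q < w p

/-- `u ⋖ₖ w` : cover in the `k`-Bruhat order (1-indexed `k`; positions 0-indexed,
so `i ≤ k < j` becomes `↑i < k ≤ ↑j`). -/
def kCover (n k : ℕ) (u w : Equiv.Perm (Fin n)) : Prop :=
  ∃ i j : Fin n, (i : ℕ) < k ∧ k ≤ (j : ℕ) ∧ u = w * Equiv.swap i j ∧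
    invCount w = invCount u + 1

/-- An increasing `k`-chain `v 0 ⋖ₖ v 1 ⋖ₖ ⋯ ⋖ₖ v d`, with
`v m = v (m+1) * swap (a m) (b m)` and strictly increasing smaller swapped values
`v m (a m)`. -/
def IsIncKChain (n k : ℕ) {d : ℕ} (v : Fin (d + 1) → Equiv.Perm (Fin n))
    (a b : Fin d → Fin n) : Prop :=
  (∀ m : Fin d, (a m : ℕ) < k ∧ k ≤ (b m : ℕ) ∧
      v m.castSucc = v m.succ * Equiv.swap (a m) (b m) ∧
      invCount (v m.succ) = invCount (v m.castSucc) + 1) ∧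
  ∀ m m' : Fin d, m < m' → v m.castSucc (a m) < v m'.castSucc (a m')

/-- There is an increasing `k`-chain of length `d` (number of covers) from `u` to `w`. -/
def ExIncKChainLen (n k d : ℕ) (u w : Equiv.Perm (Fin n)) : Prop :=
  ∃ (v : Fin (d + 1) → Equiv.Perm (Fin n)) (a b : Fin d → Fin n),
    IsIncKChain n k v a b ∧ v 0 = u ∧ v (Fin.last d) = w

/-!
An increasing `k`-chain swaps its first smaller value `t = u(a₀)` from position `a₀` to
position `b₀` and never moves it again, because every later swap involves two values above `t`;
so the end point `w` determines `b₀ = w⁻¹(t)`. If two increasing chains from `u` to `w` started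
with smaller values `t < t'`, the second one would never move `t`, giving
`b₀ = w⁻¹(t) = u⁻¹(t) = a₀`, which is absurd as `a₀ < k ≤ b₀`. Hence both chains take the same
first step, and induction along the chains finishes; the lengths agree because every cover adds
exactly one inversion.
-/

open Equiv Finset

def inversions {n : ℕ} (w : Perm (Fin n)) : Finset (Fin n × Fin n) :=
  univ.filter fun p => p.1 < p.2 ∧ w p.2 < w p.1

theorem mem_inversions {n : ℕ} {w : Perm (Fin n)} {p : Fin n × Fin n} :
    p ∈ inversions w ↔ p.1 < p.2 ∧ w p.2 < w p.1 := by
  simp [inversions]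

theorem invCount_mul_swap_lt {n : ℕ} (u : Perm (Fin n)) {i j : Fin n} (hij : i < j)
    (hu : u j < u i) : invCount (u * swap i j) < invCount u := by
  -- Apply the swap to the positions of an inversion of `u * swap i j` when this keeps them in order.
  let Φ : Fin n × Fin n → Fin n × Fin n := fun p =>
    if swap i j p.1 < swap i j p.2 then (swap i j p.1, swap i j p.2) else p
  have hmaps : ∀ p ∈ inversions (u * swap i j), Φ p ∈ (inversions u).erase (i, j) := by
    rintro ⟨x, y⟩ hp
    simp only [mem_inversions, Perm.mul_apply] at hp
    simp only [Φ, Finset.mem_erase, mem_inversions, ne_eq, Prod.ext_iff]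
    simp only [swap_apply_def] at hp ⊢
    split_ifs at hp ⊢ <;> subst_vars <;> grind [EmbeddingLike.apply_eq_iff_eq]
  have hinj : Set.InjOn Φ (inversions (u * swap i j)) := by
    rintro ⟨x, y⟩ hp ⟨x', y'⟩ hq he
    simp only [Finset.mem_coe, mem_inversions] at hp hq
    simp only [Φ, Prod.ext_iff] at he ⊢
    split_ifs at he <;> grind [swap_apply_self]
  calc invCount (u * swap i j) ≤ ((inversions u).erase (i, j)).card :=
        card_le_card_of_injOn Φ hmaps hinj
    _ < invCount u := card_erase_lt_of_mem (mem_inversions.2 ⟨hij, hu⟩)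

theorem Fin.apply_eq_of_forall_succ_eq {α : Type*} {d : ℕ} {f : Fin (d + 1) → α}
    {i : Fin (d + 1)} (hf : ∀ m : Fin d, i ≤ m.castSucc → f m.succ = f m.castSucc)
    {j : Fin (d + 1)} (hij : i ≤ j) : f j = f i := by
  induction j using Fin.induction with
  | zero => rw [le_antisymm hij (Fin.zero_le i)]
  | succ m ih =>
    by_cases hm : i ≤ m.castSucc
    · rw [hf m hm, ih hm]
    · rw [le_antisymm hij (Fin.castSucc_lt_iff_succ_le.1 (not_le.1 hm))]

namespace IsIncKChain

variable {n k d : ℕ} {v : Fin (d + 1) → Perm (Fin n)} {a b : Fin d → Fin n}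

theorem a_lt_b (h : IsIncKChain n k v a b) (m : Fin d) : a m < b m := by
  obtain ⟨ha, hb, -⟩ := h.1 m
  exact Fin.lt_def.2 (ha.trans_le hb)

theorem succ_eq (h : IsIncKChain n k v a b) (m : Fin d) :
    v m.succ = v m.castSucc * swap (a m) (b m) := by
  rw [(h.1 m).2.2.1, mul_assoc, swap_mul_self, mul_one]

theorem castSucc_apply_a_lt_b (h : IsIncKChain n k v a b) (m : Fin d) :
    v m.castSucc (a m) < v m.castSucc (b m) := by
  by_contra! hle
  have hlt := invCount_mul_swap_lt (v m.castSucc) (h.a_lt_b m)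
    (hle.lt_of_ne ((v m.castSucc).injective.ne (h.a_lt_b m).ne'))
  rw [← h.succ_eq, (h.1 m).2.2.2] at hlt
  omega

theorem strictMono (h : IsIncKChain n k v a b) :
    StrictMono fun m => v m.castSucc (a m) :=
  h.2

theorem invCount_eq_add (h : IsIncKChain n k v a b) (j : Fin (d + 1)) :
    invCount (v j) = invCount (v 0) + j := by
  induction j using Fin.induction with
  | zero => rfl
  | succ m ih => rw [(h.1 m).2.2.2, ih]; simp [add_assoc]

theorem inv_succ_apply_of_ne (h : IsIncKChain n k v a b) {m : Fin d} {t : Fin n}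
    (ha : t ≠ v m.castSucc (a m)) (hb : t ≠ v m.castSucc (b m)) :
    (v m.succ)⁻¹ t = (v m.castSucc)⁻¹ t := by
  rw [h.succ_eq, mul_inv_rev, swap_inv, Perm.mul_apply, swap_apply_of_ne_of_ne]
  · exact fun hc => ha (Perm.inv_eq_iff_eq.1 hc)
  · exact fun hc => hb (Perm.inv_eq_iff_eq.1 hc)

theorem inv_apply_eq_of_lt (h : IsIncKChain n k v a b) {t : Fin n} {i j : Fin (d + 1)}
    (ht : ∀ m : Fin d, i ≤ m.castSucc → t < v m.castSucc (a m)) (hij : i ≤ j) :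
    (v j)⁻¹ t = (v i)⁻¹ t :=
  Fin.apply_eq_of_forall_succ_eq (f := fun j => (v j)⁻¹ t)
    (fun m hm => h.inv_succ_apply_of_ne (ht m hm).ne
      ((ht m hm).trans (h.castSucc_apply_a_lt_b m)).ne) hij

theorem inv_apply_castSucc_apply_a (h : IsIncKChain n k v a b) {m : Fin d}
    {j : Fin (d + 1)} (hj : m.succ ≤ j) : (v j)⁻¹ (v m.castSucc (a m)) = b m := by
  rw [h.inv_apply_eq_of_lt (fun m' hm' => h.strictMono (Fin.succ_le_castSucc_iff.1 hm')) hj,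
    Perm.inv_eq_iff_eq, h.succ_eq, Perm.mul_apply, swap_apply_right]

theorem length_eq {e : ℕ} {v' : Fin (e + 1) → Perm (Fin n)} {a' b' : Fin e → Fin n}
    (h : IsIncKChain n k v a b) (h' : IsIncKChain n k v' a' b')
    (hstart : v 0 = v' 0) (hend : v (Fin.last d) = v' (Fin.last e)) : d = e := by
  have := h.invCount_eq_add (Fin.last d)
  rw [hend, h'.invCount_eq_add, hstart, Fin.val_last, Fin.val_last] at this
  omega

section SameLength

variable {v' : Fin (d + 1) → Perm (Fin n)} {a' b' : Fin d → Fin n}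

theorem not_castSucc_apply_a_lt (h : IsIncKChain n k v a b) (h' : IsIncKChain n k v' a' b')
    {m : Fin d} (hm : v m.castSucc = v' m.castSucc) (hend : v (Fin.last d) = v' (Fin.last d)) :
    ¬ v m.castSucc (a m) < v' m.castSucc (a' m) := by
  intro hlt
  have hfixed : (v' (Fin.last d))⁻¹ (v m.castSucc (a m)) = a m := by
    rw [h'.inv_apply_eq_of_lt (i := m.castSucc) (fun m' hm' => hlt.trans_le
      (h'.strictMono.monotone (Fin.castSucc_le_castSucc_iff.1 hm'))) (Fin.le_last _), ← hm,
      Perm.inv_eq_iff_eq]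
  have hmoved := h.inv_apply_castSucc_apply_a (m := m) (Fin.le_last _)
  rw [hend, hfixed] at hmoved
  exact (h.a_lt_b m).ne hmoved

theorem succ_eq_of_castSucc_eq (h : IsIncKChain n k v a b) (h' : IsIncKChain n k v' a' b')
    {m : Fin d} (hm : v m.castSucc = v' m.castSucc) (hend : v (Fin.last d) = v' (Fin.last d)) :
    v m.succ = v' m.succ := by
  have ht : v m.castSucc (a m) = v' m.castSucc (a' m) :=
    le_antisymm (not_lt.1 (h'.not_castSucc_apply_a_lt h hm.symm hend.symm))
      (not_lt.1 (h.not_castSucc_apply_a_lt h' hm hend))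
  have ha : a m = a' m := (v m.castSucc).injective (by rw [ht, hm])
  have hb : b m = b' m := by
    rw [← h.inv_apply_castSucc_apply_a (Fin.le_last _),
      ← h'.inv_apply_castSucc_apply_a (Fin.le_last _), hend, ht]
  rw [h.succ_eq, h'.succ_eq, hm, ha, hb]

theorem eq_of_endpoints_eq (h : IsIncKChain n k v a b) (h' : IsIncKChain n k v' a' b')
    (hstart : v 0 = v' 0) (hend : v (Fin.last d) = v' (Fin.last d)) : v = v' :=
  funext fun j => Fin.induction hstart (fun _ hm => h.succ_eq_of_castSucc_eq h' hm hend) j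

end SameLength

end IsIncKChain

theorem stmt3 (n k d e : ℕ)
    (v : Fin (d + 1) → Equiv.Perm (Fin n)) (a b : Fin d → Fin n)
    (v' : Fin (e + 1) → Equiv.Perm (Fin n)) (a' b' : Fin e → Fin n)
    (h1 : IsIncKChain n k v a b) (h2 : IsIncKChain n k v' a' b')
    (hstart : v 0 = v' 0) (hend : v (Fin.last d) = v' (Fin.last e)) :
    d = e ∧ ∀ (i : ℕ) (hi : i < d + 1) (hi' : i < e + 1), v ⟨i, hi⟩ = v' ⟨i, hi'⟩ := by
  obtain rfl := h1.length_eq h2 hstart hend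
  exact ⟨rfl, fun i hi _ => congrFun (h1.eq_of_endpoints_eq h2 hstart hend) ⟨i, hi⟩⟩
end

section
/- Let k ∈ [n-1] and let u ⋖ₖ v ⋖₁ w be covers in Sₙ, with v = w·t_{1,a} and u = v·t_{b,c} for b ≤ k < c, such that 1, a, b, c are four distinct indices. Then u ⋖₁ w·t_{b,c} ⋖ₖ w; that is, w·t_{b,c} is a Bruhat cocover of w via a transposition with both data positions straddling k, and u = (w·t_{b,c})·t_{1,a} is a Bruhat cocover of w·t_{b,c} via a transposition involving position 1. -/
open Finset Equiv

theorem Fintype.sum_sum_eq_of_eq_zero_off_pair {α M : Type*} [Fintype α] [DecidableEq α]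
    [AddCommMonoid M] (h : α → α → M) {i j : α} (hij : i ≠ j)
    (hzero : ∀ p ∈ ({i, j} : Finset α)ᶜ, ∀ q ∈ ({i, j} : Finset α)ᶜ, h p q = 0) :
    ∑ p, ∑ q, h p q =
      ∑ m ∈ {i, j}ᶜ, (h i m + h j m + h m i + h m j) + (h i i + h i j + h j i + h j j) := by
  have hcompl : ∑ p ∈ ({i, j} : Finset α)ᶜ, ∑ q ∈ ({i, j} : Finset α)ᶜ, h p q = 0 :=
    Finset.sum_eq_zero fun p hp => Finset.sum_eq_zero fun q hq => hzero p hp q hq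
  simp only [← sum_compl_add_sum ({i, j} : Finset α), sum_add_distrib, sum_pair hij, hcompl]
  abel

section
variable {n : ℕ}

theorem invCount_eq_sum (w : Perm (Fin n)) :
    (invCount w : ℤ) = ∑ p : Fin n, ∑ q : Fin n, if p < q ∧ w q < w p then 1 else 0 := by
  rw [invCount, card_filter]; push_cast; rw [Fintype.sum_prod_type]

theorem invCount_mul_swap_eq_sum (w : Perm (Fin n)) (i j : Fin n) :
    (invCount (w * swap i j) : ℤ) =
      ∑ p : Fin n, ∑ q : Fin n, if swap i j p < swap i j q ∧ w q < w p then 1 else 0 := by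
  rw [invCount_eq_sum, ← Fintype.sum_prod_type', ← Fintype.sum_prod_type']
  exact Fintype.sum_equiv (prodCongr (swap i j) (swap i j)) _ _ fun p => by
    simp only [prodCongr_apply, Prod.map, Perm.mul_apply, swap_apply_self]
    congr

theorem invCount_eq_invCount_mul_swap_add (w : Perm (Fin n)) {i j : Fin n} (hij : i < j)
    (hw : w j < w i) :
    (invCount w : ℤ) = invCount (w * swap i j) + 1 +
      2 * #{m | i < m ∧ m < j ∧ w j < w m ∧ w m < w i} := by
  set h : Fin n → Fin n → ℤ := fun p q => (if p < q ∧ w q < w p then 1 else 0) -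
    if swap i j p < swap i j q ∧ w q < w p then 1 else 0 with hh
  have hdiff : (invCount w : ℤ) - invCount (w * swap i j) = ∑ p, ∑ q, h p q := by
    rw [invCount_mul_swap_eq_sum, invCount_eq_sum, ← sum_sub_distrib]
    exact sum_congr rfl fun p _ => (sum_sub_distrib ..).symm
  have hzero :
      ∀ p ∈ ({i, j} : Finset (Fin n))ᶜ, ∀ q ∈ ({i, j} : Finset (Fin n))ᶜ, h p q = 0 := by
    intro p hp q hq
    simp only [mem_compl, mem_insert, mem_singleton, not_or] at hp hq
    simp [hh, swap_apply_of_ne_of_ne hp.1 hp.2, swap_apply_of_ne_of_ne hq.1 hq.2]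
  have hcorner : h i i + h i j + h j i + h j j = 1 := by
    simp [hh, hij, hw, hij.not_gt, hw.not_gt]
  have hside : ∀ m ∈ ({i, j} : Finset (Fin n))ᶜ, h i m + h j m + h m i + h m j =
      2 * if i < m ∧ m < j ∧ w j < w m ∧ w m < w i then 1 else 0 := by
    intro m hm
    simp only [mem_compl, mem_insert, mem_singleton, not_or] at hm
    simp only [hh, swap_apply_left, swap_apply_right, swap_apply_of_ne_of_ne hm.1 hm.2]
    rcases lt_or_gt_of_ne hm.1 with hmi | hmi <;> rcases lt_or_gt_of_ne hm.2 with hmj | hmj <;>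
      rcases lt_or_gt_of_ne (w.injective.ne hm.1) with hwi | hwi <;>
      rcases lt_or_gt_of_ne (w.injective.ne hm.2) with hwj | hwj <;>
      simp [hmi, hmj, hwi, hwj, hmi.not_gt, hmj.not_gt, hwi.not_gt, hwj.not_gt] <;> order
  have hcount : ∑ m ∈ ({i, j} : Finset (Fin n))ᶜ,
      (if i < m ∧ m < j ∧ w j < w m ∧ w m < w i then 1 else 0 : ℤ) =
      #{m | i < m ∧ m < j ∧ w j < w m ∧ w m < w i} := by
    rw [← sum_boole]
    refine sum_subset (subset_univ _) fun m _ hm => ?_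
    simp only [mem_compl, not_not, mem_insert, mem_singleton] at hm
    rcases hm with rfl | rfl <;> simp
  rw [Fintype.sum_sum_eq_of_eq_zero_off_pair h hij.ne hzero, sum_congr rfl hside, ← mul_sum,
    hcount, hcorner] at hdiff
  linarith

theorem invCount_eq_invCount_mul_swap_add_one_iff (w : Perm (Fin n)) {i j : Fin n}
    (hij : i < j) :
    invCount w = invCount (w * swap i j) + 1 ↔
      w j < w i ∧ ∀ m, i < m → m < j → ¬(w j < w m ∧ w m < w i) := by
  rcases lt_or_gt_of_ne (w.injective.ne hij.ne') with hw | hw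
  · have hgap := invCount_eq_invCount_mul_swap_add w hij hw
    have hempty : #{m | i < m ∧ m < j ∧ w j < w m ∧ w m < w i} = 0 ↔
        ∀ m, i < m → m < j → ¬(w j < w m ∧ w m < w i) := by
      simp [filter_eq_empty_iff]
    rw [and_iff_right hw, ← hempty]
    constructor <;> intro <;> omega
  · have hw' : (w * swap i j) j < (w * swap i j) i := by simpa using hw
    have hgap := invCount_eq_invCount_mul_swap_add (w * swap i j) hij hw'
    rw [mul_swap_mul_self] at hgap
    exact iff_of_false (by omega) fun h => lt_asymm hw h.1

section LenartMove

variable {w : Perm (Fin n)} {z a b c : Fin n}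

theorem apply_lt_apply_of_covers_of_lt_of_lt (hzb : z < b) (hba : b < a) (hac : a < c)
    (h₁ : invCount w = invCount (w * swap z a) + 1)
    (h₂ : invCount (w * swap z a) = invCount (w * swap z a * swap b c) + 1)
    (hcz : w c < w z) : w b < w a := by
  have hza := hzb.trans hba
  obtain ⟨-, gap₁⟩ := (invCount_eq_invCount_mul_swap_add_one_iff w hza).1 h₁
  obtain ⟨-, gap₂⟩ := (invCount_eq_invCount_mul_swap_add_one_iff _ (hba.trans hac)).1 h₂
  have hbz : w b < w z := by
    have := gap₂ a hba hac
    simp only [Perm.mul_apply, swap_apply_right, swap_apply_of_ne_of_ne hzb.ne' hba.ne,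
      swap_apply_of_ne_of_ne (hzb.trans (hba.trans hac)).ne' hac.ne'] at this
    exact lt_of_le_of_ne (not_lt.1 fun h => this ⟨hcz, h⟩) (w.injective.ne hzb.ne')
  exact lt_of_le_of_ne (not_lt.1 fun h => gap₁ b hzb hba ⟨h, hbz⟩) (w.injective.ne hba.ne)

theorem invCount_eq_invCount_mul_swap_add_one_of_covers (hza : z < a) (hzb : z < b)
    (hbc : b < c) (hab : a ≠ b) (hac : a ≠ c)
    (h₁ : invCount w = invCount (w * swap z a) + 1)
    (h₂ : invCount (w * swap z a) = invCount (w * swap z a * swap b c) + 1) :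
    invCount w = invCount (w * swap b c) + 1 := by
  obtain ⟨hwa, -⟩ := (invCount_eq_invCount_mul_swap_add_one_iff w hza).1 h₁
  obtain ⟨hwc, gap₂⟩ := (invCount_eq_invCount_mul_swap_add_one_iff _ hbc).1 h₂
  have hv : ∀ m, m ≠ z → m ≠ a → (w * swap z a) m = w m := fun m hmz hma => by
    rw [Perm.mul_apply, swap_apply_of_ne_of_ne hmz hma]
  rw [hv b hzb.ne' hab.symm, hv c (hzb.trans hbc).ne' hac.symm] at hwc gap₂
  refine (invCount_eq_invCount_mul_swap_add_one_iff w hbc).2 ⟨hwc, fun m hbm hmc hm => ?_⟩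
  obtain rfl | hma := eq_or_ne m a
  · exact lt_asymm hm.2
      (apply_lt_apply_of_covers_of_lt_of_lt hzb hbm hmc h₁ h₂ (hm.1.trans hwa))
  · exact gap₂ m hbm hmc (by rwa [hv m (hzb.trans hbm).ne' hma])

theorem invCount_mul_swap_eq_invCount_mul_swap_mul_swap_add_one_of_covers (hza : z < a)
    (hzb : z < b) (hbc : b < c) (hab : a ≠ b) (hac : a ≠ c)
    (h₁ : invCount w = invCount (w * swap z a) + 1)
    (h₂ : invCount (w * swap z a) = invCount (w * swap z a * swap b c) + 1) :
    invCount (w * swap b c) = invCount (w * swap b c * swap z a) + 1 := by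
  have hzc := hzb.trans hbc
  obtain ⟨hwa, gap₁⟩ := (invCount_eq_invCount_mul_swap_add_one_iff w hza).1 h₁
  obtain ⟨hwc, -⟩ := (invCount_eq_invCount_mul_swap_add_one_iff _ hbc).1 h₂
  simp only [Perm.mul_apply, swap_apply_of_ne_of_ne hzb.ne' hab.symm,
    swap_apply_of_ne_of_ne hzc.ne' hac.symm] at hwc
  have hx : ∀ m, m ≠ b → m ≠ c → (w * swap b c) m = w m := fun m hmb hmc => by
    rw [Perm.mul_apply, swap_apply_of_ne_of_ne hmb hmc]
  refine (invCount_eq_invCount_mul_swap_add_one_iff _ hza).2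
    ⟨by rwa [hx a hab hac, hx z hzb.ne hzc.ne], fun m hzm hma hm => ?_⟩
  rw [hx a hab hac, hx z hzb.ne hzc.ne] at hm
  obtain rfl | hmb := eq_or_ne m b
  · rw [Perm.mul_apply, swap_apply_left] at hm
    rcases lt_or_gt_of_ne hac with hac_lt | hca
    · exact lt_asymm (hm.1.trans hwc)
        (apply_lt_apply_of_covers_of_lt_of_lt hzm hma hac_lt h₁ h₂ hm.2)
    · exact gap₁ c hzc hca hm
  obtain rfl | hmc := eq_or_ne m c
  · rw [Perm.mul_apply, swap_apply_right] at hm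
    exact gap₁ b hzb (hbc.trans hma) hm
  · exact gap₁ m hzm hma (by rwa [hx m hmb hmc] at hm)

end LenartMove

end

theorem stmt14_general (n k : ℕ) (hn : 0 < n)
    (w : Equiv.Perm (Fin n)) (a b c : Fin n)
    (hbk : (b : ℕ) < k) (hkc : k ≤ (c : ℕ))
    (ha0 : (a : ℕ) ≠ 0) (hb0 : (b : ℕ) ≠ 0)
    (hab : a ≠ b) (hac : a ≠ c)
    (hcov1 : invCount w = invCount (w * Equiv.swap ⟨0, hn⟩ a) + 1)
    (hcov2 : invCount (w * Equiv.swap ⟨0, hn⟩ a)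
      = invCount (w * Equiv.swap ⟨0, hn⟩ a * Equiv.swap b c) + 1) :
    invCount w = invCount (w * Equiv.swap b c) + 1 ∧
    invCount (w * Equiv.swap b c)
      = invCount (w * Equiv.swap b c * Equiv.swap ⟨0, hn⟩ a) + 1 ∧
    w * Equiv.swap ⟨0, hn⟩ a * Equiv.swap b c
      = w * Equiv.swap b c * Equiv.swap ⟨0, hn⟩ a := by
  have hza : (⟨0, hn⟩ : Fin n) < a := Fin.lt_def.2 (Nat.pos_of_ne_zero ha0)
  have hzb : (⟨0, hn⟩ : Fin n) < b := Fin.lt_def.2 (Nat.pos_of_ne_zero hb0)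
  have hbc : b < c := Fin.lt_def.2 (hbk.trans_le hkc)
  have hdisjoint : [⟨0, hn⟩, a, b, c].Nodup := by
    simp [hza.ne, hzb.ne, (hzb.trans hbc).ne, hab, hac, hbc.ne]
  refine ⟨invCount_eq_invCount_mul_swap_add_one_of_covers hza hzb hbc hab hac hcov1 hcov2,
    invCount_mul_swap_eq_invCount_mul_swap_mul_swap_add_one_of_covers hza hzb hbc hab hac
      hcov1 hcov2, ?_⟩
  rw [mul_assoc, mul_assoc, (Perm.disjoint_swap_swap hdisjoint).commute.eq]

theorem stmt14 (n k : ℕ) (hn : 0 < n) (hk1 : 1 ≤ k) (hk2 : k ≤ n - 1)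
    (w : Equiv.Perm (Fin n)) (a b c : Fin n)
    (hbk : (b : ℕ) < k) (hkc : k ≤ (c : ℕ))
    (ha0 : (a : ℕ) ≠ 0) (hb0 : (b : ℕ) ≠ 0) (hc0 : (c : ℕ) ≠ 0)
    (hab : a ≠ b) (hac : a ≠ c) (hbc : b ≠ c)
    (hcov1 : invCount w = invCount (w * Equiv.swap ⟨0, hn⟩ a) + 1)
    (hcov2 : invCount (w * Equiv.swap ⟨0, hn⟩ a)
      = invCount (w * Equiv.swap ⟨0, hn⟩ a * Equiv.swap b c) + 1) :
    invCount w = invCount (w * Equiv.swap b c) + 1 ∧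
    invCount (w * Equiv.swap b c)
      = invCount (w * Equiv.swap b c * Equiv.swap ⟨0, hn⟩ a) + 1 ∧
    w * Equiv.swap ⟨0, hn⟩ a * Equiv.swap b c
      = w * Equiv.swap b c * Equiv.swap ⟨0, hn⟩ a :=
  stmt14_general n k hn w a b c hbk hkc ha0 hb0 hab hac hcov1 hcov2
end
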